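/- arXiv:2107.12293 — 6 statements merged into one kernel-verified Lean document; each statement's English description precedes it below -/
import Mathlib

section
/- Let S be a monoid, U a submonoid of S, and d ∈ S. If for every group G and every pair of monoid homomorphisms f, g : S → G with f(u) = g(u) for all u ∈ U one has f(d) = g(d), then for the canonical monoid homomorphism μ : S → G(S) into the universal enveloping group of S, μ(d) lies in the subgroup of G(S) generated by μ(U). -/
universe u

open GrpCat.SurjectiveOfEpiAuxs in
/-- The witnesses are the two permutation representations from the proof that epimorphisms of
groups are surjective: `G` acting on the cosets of `H` plus a point at infinity, and its conjugate
by the transposition swapping the coset `H` with infinity. -/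
theorem Subgroup.exists_eqLocus_eq {G : Type u} [Group G] (H : Subgroup G) :
    ∃ (K : Type u) (_ : Group K) (φ ψ : G →* K), φ.eqLocus ψ = H := by
  let ι : GrpCat.of H ⟶ GrpCat.of G := GrpCat.ofHom H.subtype
  refine ⟨_, inferInstance, h ι, g ι, ?_⟩
  ext x
  have hx : x ∈ H.subtype.range ↔ h ι x = g ι x := Set.ext_iff.mp (agree ι) x
  rw [H.range_subtype] at hx
  exact hx.symm

theorem weak_dominion_subset_universal_group_general
    {S : Type} [Monoid S] (U : Submonoid S) (d : S)
    (GS : Type) [Group GS] (μ : S →* GS)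
    (hwd : ∀ (G : Type) [Group G] (f g : S →* G),
      (∀ u ∈ U, f u = g u) → f d = g d) :
    μ d ∈ Subgroup.closure (μ '' (U : Set S)) := by
  obtain ⟨K, _, φ, ψ, hH⟩ := (Subgroup.closure (μ '' (U : Set S))).exists_eqLocus_eq
  rw [← hH]
  exact hwd K (φ.comp μ) (ψ.comp μ) fun u hu =>
    show μ u ∈ φ.eqLocus ψ from hH ▸ Subgroup.subset_closure ⟨u, hu, rfl⟩

/-- If `d` lies in the weak dominion of a submonoid `U` of a monoid `S`
(any two monoid homomorphisms from `S` to a group agreeing on `U` agree at `d`),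
then the image of `d` under the canonical map `μ : S → G(S)` into the universal
enveloping group lies in the subgroup generated by `μ(U)`. -/
theorem weak_dominion_subset_universal_group
    {S : Type} [Monoid S] (U : Submonoid S) (d : S)
    (GS : Type) [Group GS] (μ : S →* GS)
    (huniv : ∀ (G : Type) [Group G] (f : S →* G),
      ∃! fhat : GS →* G, fhat.comp μ = f)
    (hwd : ∀ (G : Type) [Group G] (f g : S →* G),
      (∀ u ∈ U, f u = g u) → f d = g d) :
    μ d ∈ Subgroup.closure (μ '' (U : Set S)) :=
  weak_dominion_subset_universal_group_general U d GS μ hwd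
end

section
/- Every group, regarded as a monoid, is absolutely closed: if G is a group contained as a submonoid in a monoid S, then the dominion of G in S equals G itself. -/
/-!
Let `S` act on `S × Bool` by left multiplication on the first factor and let `σ` flip the
`Bool` over the points of `H`. As `H` is a group, `u * a ∈ H ↔ a ∈ H` for `u ∈ H`, so left
multiplication by `u` commutes with `σ`. Left multiplication by `d ∉ H` moves `(1, b)` from the
fibre over `H` to one outside it, so it does not. Hence the left multiplication action and its
conjugate by `σ` are two monoid homomorphisms agreeing on `H` and separating `d`.
-/

def Equiv.endCongr {α β : Type*} (e : α ≃ β) : Function.End α ≃* Function.End β :=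
  { e.conj with map_mul' := e.conj_comp }

theorem Equiv.endCongr_apply_apply {α β : Type*} (e : α ≃ β) (f : Function.End α) (b : β) :
    e.endCongr f b = e (f (e.symm b)) :=
  rfl

namespace Set

variable {α : Type*} (A : Set α) [DecidablePred (· ∈ A)]

def flipBoolOn : Equiv.Perm (α × Bool) :=
  (Equiv.refl α).prodShear fun a => if a ∈ A then Equiv.boolNot else Equiv.refl Bool

@[simp]
theorem flipBoolOn_apply (p : α × Bool) : A.flipBoolOn p = (p.1, p.2 ^^ decide (p.1 ∈ A)) := by
  by_cases h : p.1 ∈ A <;> simp [flipBoolOn, h]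

@[simp]
theorem flipBoolOn_symm : A.flipBoolOn.symm = A.flipBoolOn := by
  ext p <;> by_cases h : p.1 ∈ A <;> simp [flipBoolOn, h]

end Set

variable {S : Type*} [Monoid S]

variable (S) in
def leftMulProdEnd (β : Type*) : S →* Function.End (S × β) where
  toFun s p := (s * p.1, p.2)
  map_one' := funext fun p => Prod.ext (one_mul p.1) rfl
  map_mul' s t := funext fun p => Prod.ext (mul_assoc s t p.1) rfl

@[simp]
theorem leftMulProdEnd_apply_apply {β : Type*} (s : S) (p : S × β) :
    leftMulProdEnd S β s p = (s * p.1, p.2) :=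
  rfl

theorem Submonoid.mul_mem_iff_of_inv_mem {H : Submonoid S} {u u' : S} (hu : u ∈ H)
    (hu' : u' ∈ H) (h : u' * u = 1) {a : S} : u * a ∈ H ↔ a ∈ H :=
  ⟨fun hua => by simpa [← mul_assoc, h] using H.mul_mem hu' hua, H.mul_mem hu⟩

section

variable {H : Submonoid S} [DecidablePred (· ∈ H)]

theorem endCongr_flipBoolOn_leftMulProdEnd_of_inv_mem {u u' : S} (hu : u ∈ H) (hu' : u' ∈ H)
    (h : u' * u = 1) :
    (H : Set S).flipBoolOn.endCongr (leftMulProdEnd S Bool u) = leftMulProdEnd S Bool u :=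
  funext fun p => by simp [Equiv.endCongr_apply_apply, H.mul_mem_iff_of_inv_mem hu hu' h]

theorem endCongr_flipBoolOn_leftMulProdEnd_ne {d : S} (hd : d ∉ H) :
    (H : Set S).flipBoolOn.endCongr (leftMulProdEnd S Bool d) ≠ leftMulProdEnd S Bool d := by
  intro h
  have h_one := congrFun h (1, false)
  simp [Equiv.endCongr_apply_apply, hd, H.one_mem] at h_one

end

/-- Every group, regarded as a monoid, is absolutely closed.  If `H` is a
submonoid of a monoid `S` which is a group (every element of `H` has a two-sided
inverse in `H`), then the dominion of `H` in `S` equals `H` itself. -/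
theorem group_absolutely_closed
    {S : Type} [Monoid S] (H : Submonoid S)
    (hgrp : ∀ h ∈ H, ∃ h' ∈ H, h * h' = 1 ∧ h' * h = 1) :
    {d : S | ∀ (T : Type) [Monoid T] (f g : S →* T),
        (∀ u ∈ H, f u = g u) → f d = g d} = (H : Set S) := by
  classical
  refine Set.Subset.antisymm (fun d hd => ?_) fun u hu T _ f g hfg => hfg u hu
  by_contra hdH
  let f := leftMulProdEnd S Bool
  let g := (H : Set S).flipBoolOn.endCongr.toMonoidHom.comp f
  have hfg : ∀ u ∈ H, f u = g u := fun u hu => by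
    obtain ⟨u', hu', -, hu'u⟩ := hgrp u hu
    exact (endCongr_flipBoolOn_leftMulProdEnd_of_inv_mem hu hu' hu'u).symm
  exact endCongr_flipBoolOn_leftMulProdEnd_ne hdH (hd _ f g hfg).symm
end

section
/- Let U be a submonoid of a monoid S and d ∈ S. Then d ∈ Dom_S(U) if and only if d ⊗ 1 = 1 ⊗ d in the tensor product S ⊗_U S of S with itself over U (Isbell's zigzag theorem, Stenström version). -/
/-!
If `d ⊗ 1 = 1 ⊗ d` and `f, g : S →* T` agree on `U`, then `a ⊗ b ↦ f a * g b` is well defined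
on `S ⊗_U S` and carries `d ⊗ 1` to `f d` and `1 ⊗ d` to `g d`.

Conversely, the free abelian group `M` on `S ⊗_U S` is an `S`-bimodule, so `S ⋉ M`
(`TrivSqZeroExt S M`) is a monoid containing `S` via `inl`, and `(1, [1 ⊗ 1])` is a unit of it.
Conjugating `inl` by this unit gives a second homomorphism, which agrees with `inl` at `s`
exactly when `s • [1 ⊗ 1] = [1 ⊗ 1] • s`, i.e. when `s ⊗ 1 = 1 ⊗ s`. This holds on `U`,
hence at every element of the dominion.
-/

/-- The defining relation of the tensor product `S ⊗_U S`: `(a*u, b)` is identified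
with `(a, u*b)` for `u ∈ U`. -/
def tensorRel {S : Type} [Monoid S] (U : Submonoid S) :
    S × S → S × S → Prop :=
  fun p q => ∃ (a b u : S), u ∈ U ∧ p = (a * u, b) ∧ q = (a, u * b)

open MulOpposite TrivSqZeroExt
open scoped RightActions

def Units.conjHom {M : Type*} [Monoid M] (u : Mˣ) : M →* M where
  toFun x := u * x * ↑u⁻¹
  map_one' := by simp
  map_mul' x y := by simp only [mul_assoc, Units.inv_mul_cancel_left]

theorem Units.conjHom_apply_eq_iff {M : Type*} [Monoid M] (u : Mˣ) (x : M) :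
    u.conjHom x = x ↔ Commute (u : M) x :=
  u.commute_iff_mul_inv_cancel.symm

namespace TrivSqZeroExt

variable {R M : Type*} [Monoid R] [AddGroup M] [DistribMulAction R M] [DistribMulAction Rᵐᵒᵖ M]
  [SMulCommClass R Rᵐᵒᵖ M]

def inlMonoidHom : R →* TrivSqZeroExt R M where
  toFun := inl
  map_one' := inl_one M
  map_mul' := inl_mul M

def unitOfSnd (m : M) : (TrivSqZeroExt R M)ˣ where
  val := (1, m)
  inv := (1, -m)
  val_inv := ext (mul_one _) <| show (1 : R) •> -m + m <• (1 : R) = 0 by simp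
  inv_val := ext (mul_one _) <| show (1 : R) •> m + -m <• (1 : R) = 0 by simp

theorem commute_unitOfSnd_inl_iff (m : M) (r : R) :
    Commute (unitOfSnd (R := R) m : TrivSqZeroExt R M) (inl r) ↔ m <• r = r •> m := by
  rw [Commute, SemiconjBy, TrivSqZeroExt.ext_iff]
  change 1 * r = r * 1 ∧ (1 : R) •> (0 : M) + m <• r = r •> m + (0 : M) <• (1 : R) ↔ _
  simp

end TrivSqZeroExt

section

attribute [local instance] Finsupp.comapSMul

theorem Finsupp.comapSMul_smulCommClass {G H α M : Type*} [Monoid G] [Monoid H] [MulAction G α]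
    [MulAction H α] [SMulCommClass G H α] [AddCommMonoid M] : SMulCommClass G H (α →₀ M) where
  smul_comm g h v := by
    simp only [comapSMul_def, ← mapDomain_comp]
    exact congrArg (mapDomain · v) (funext (smul_comm g h))

end

attribute [local instance] Finsupp.comapDistribMulAction Finsupp.comapSMul_smulCommClass

abbrev SelfTensor {S : Type} [Monoid S] (U : Submonoid S) : Type := Quot (tensorRel U)

namespace SelfTensor

variable {S : Type} [Monoid S] (U : Submonoid S)

instance : MulAction S (SelfTensor U) where
  smul s := Quot.map (fun p => (s * p.1, p.2)) <| by
    rintro _ _ ⟨a, b, u, hu, rfl, rfl⟩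
    exact ⟨s * a, b, u, hu, by rw [mul_assoc], rfl⟩
  one_smul := Quot.ind fun p => congrArg (Quot.mk _) <| by simp only [one_mul]
  mul_smul s t := Quot.ind fun p => congrArg (Quot.mk _) <| by simp only [mul_assoc]

instance : MulAction Sᵐᵒᵖ (SelfTensor U) where
  smul t := Quot.map (fun p => (p.1, p.2 * t.unop)) <| by
    rintro _ _ ⟨a, b, u, hu, rfl, rfl⟩
    exact ⟨a, b * t.unop, u, hu, rfl, by rw [mul_assoc]⟩
  one_smul := Quot.ind fun p => congrArg (Quot.mk _) <| by simp only [unop_one, mul_one]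
  mul_smul s t := Quot.ind fun p => congrArg (Quot.mk _) <| by simp only [unop_mul, mul_assoc]

theorem smul_mk (s a b : S) : s • Quot.mk (tensorRel U) (a, b) = Quot.mk _ (s * a, b) := rfl

theorem op_smul_mk (t a b : S) : op t • Quot.mk (tensorRel U) (a, b) = Quot.mk _ (a, b * t) := rfl

instance : SMulCommClass S Sᵐᵒᵖ (SelfTensor U) where
  smul_comm _ _ := Quot.ind fun _ => rfl

def lift {T : Type*} [Monoid T] (f g : S →* T) (hfg : ∀ u ∈ U, f u = g u) :
    SelfTensor U → T :=
  Quot.lift (fun p => f p.1 * g p.2) <| by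
    rintro _ _ ⟨a, b, u, hu, rfl, rfl⟩
    simp only [map_mul, hfg u hu, mul_assoc]

theorem mk_eq_mk_iff_commute (s : S) :
    Quot.mk (tensorRel U) (s, 1) = Quot.mk _ (1, s) ↔
      Commute (unitOfSnd (R := S) (Finsupp.single (Quot.mk (tensorRel U) (1, 1)) (1 : ℤ)) :
        TrivSqZeroExt S (SelfTensor U →₀ ℤ)) (inl s) := by
  rw [commute_unitOfSnd_inl_iff, Finsupp.comapSMul_single, Finsupp.comapSMul_single, smul_mk,
    op_smul_mk, mul_one, one_mul, Finsupp.single_left_inj one_ne_zero, eq_comm]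

end SelfTensor

/-- Isbell's zigzag theorem, Stenström version: for a submonoid `U` of a
monoid `S` and `d ∈ S`, `d` lies in the dominion of `U` in `S` if and only if
`d ⊗ 1 = 1 ⊗ d` in the tensor product `S ⊗_U S`, i.e. `(d, 1)` and `(1, d)` are
identified by the equivalence relation generated by the tensor relation. -/
theorem isbell_zigzag
    {S : Type} [Monoid S] (U : Submonoid S) (d : S) :
    (∀ (T : Type) [Monoid T] (f g : S →* T),
        (∀ u ∈ U, f u = g u) → f d = g d) ↔
      Relation.EqvGen (tensorRel U) (d, 1) (1, d) := by
  constructor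
  · intro hdom
    let u := unitOfSnd (R := S) (Finsupp.single (Quot.mk (tensorRel U) (1, 1)) (1 : ℤ))
    let f : S →* TrivSqZeroExt S (SelfTensor U →₀ ℤ) := inlMonoidHom
    have hconj (s : S) :
        f s = u.conjHom (f s) ↔ Quot.mk (tensorRel U) (s, 1) = Quot.mk _ (1, s) := by
      rw [eq_comm, Units.conjHom_apply_eq_iff, SelfTensor.mk_eq_mk_iff_commute]
      rfl
    have hU (x : S) (hx : x ∈ U) : f x = (u.conjHom.comp f) x :=
      (hconj x).2 (Quot.sound ⟨1, 1, x, hx, by simp, by simp⟩)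
    exact Quot.eqvGen_exact ((hconj d).1 (hdom _ f _ hU))
  · intro h T _ f g hfg
    simpa [SelfTensor.lift] using congrArg (SelfTensor.lift U f g hfg) (Quot.eqvGen_sound h)
end

section
/- Let Υ be the monoid presented by generators Y ∪ Y⁻¹ and relations ab = (^{θ(a)}b)·a for all a, b ∈ Y ∪ Y⁻¹, where θ is the boundary map to the free group F̂ and ^{f}b denotes the F̂-action on generators. Let 𝔘 be the submonoid of Υ generated by all elements σ(a)σ(a⁻¹) with a ∈ Y ∪ Y⁻¹ (σ the canonical map from the free monoid to Υ). Then every element of 𝔘 is central in Υ. -/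
section

/- Setup for the monoid `Υ` of Y-sequences of a group presentation `P = (x, r)`:
`x` is the generating set, `R` indexes the relators, `ρ r ∈ F̂ = FreeGroup x` is the
relator.  A Y-symbol `(ᵘr)^ε` is a triple `(u, r, ε)` with `ε` a Boolean sign. -/
variable (x R : Type) (ρ : R → FreeGroup x)

/-- The set `Y ∪ Y⁻¹` of Y-symbols `(ᵘr)^ε`. -/
abbrev Ysym : Type := FreeGroup x × R × Bool

/-- The boundary `θ((ᵘr)^ε) = u r^ε u⁻¹ ∈ F̂`. -/
def θY : Ysym x R → FreeGroup x :=
  fun a => a.1 * (if a.2.2 then ρ a.2.1 else (ρ a.2.1)⁻¹) * a.1⁻¹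

/-- The action of `F̂` on Y-symbols: `ᵛ((ᵘr)^ε) = (ᵛᵘr)^ε`. -/
def actY : FreeGroup x → Ysym x R → Ysym x R :=
  fun v a => (v * a.1, a.2.1, a.2.2)

/-- The formal inverse `((ᵘr)^ε)⁻¹ = (ᵘr)^{-ε}`. -/
def invY : Ysym x R → Ysym x R := fun a => (a.1, a.2.1, !a.2.2)

/-- The defining relations `a b = (^{θ(a)}b) a` of the monoid `Υ`. -/
def upsilonRel : FreeMonoid (Ysym x R) → FreeMonoid (Ysym x R) → Prop :=
  fun w w' => ∃ a b : Ysym x R,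
    w = FreeMonoid.of a * FreeMonoid.of b ∧
    w' = FreeMonoid.of (actY x R (θY x R ρ a) b) * FreeMonoid.of a

/-- The monoid `Υ` presented by generators `Y ∪ Y⁻¹` and relations
`a b = (^{θ(a)}b) a`. -/
def Upsilon : Type := (conGen (upsilonRel x R ρ)).Quotient

instance : Monoid (Upsilon x R ρ) := by unfold Upsilon; infer_instance

/-- The canonical surjection `σ` from the free monoid on `Y ∪ Y⁻¹` onto `Υ`. -/
def σU : FreeMonoid (Ysym x R) →* Upsilon x R ρ :=
  Con.mk' (conGen (upsilonRel x R ρ))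

/-- The submonoid `𝔘` of `Υ` generated by the elements `σ(a)σ(a⁻¹)`. -/
def frakU : Submonoid (Upsilon x R ρ) :=
  Submonoid.closure
    {s | ∃ a : Ysym x R, s = σU x R ρ (FreeMonoid.of a * FreeMonoid.of (invY x R a))}

theorem mem_center_of_commute_freeMonoid_of {α M : Type*} [Monoid M] {f : FreeMonoid α →* M}
    (hf : Function.Surjective f) {z : M} (hz : ∀ a, Commute z (f (FreeMonoid.of a))) :
    z ∈ Submonoid.center M := by
  suffices h : ∀ w, Commute z (f w) by
    rw [Submonoid.mem_center_iff]
    intro g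
    obtain ⟨w, rfl⟩ := hf g
    exact (h w).symm.eq
  intro w
  induction w using FreeMonoid.inductionOn' with
  | one => simp
  | of_mul a w ih => simpa only [map_mul] using (hz a).mul_right ih

lemma σU_surjective : Function.Surjective (σU x R ρ) :=
  Con.mk'_surjective

lemma σU_of_mul_of (a b : Ysym x R) :
    σU x R ρ (FreeMonoid.of a * FreeMonoid.of b) =
      σU x R ρ (FreeMonoid.of (actY x R (θY x R ρ a) b) * FreeMonoid.of a) :=
  (Con.eq _).mpr (ConGen.Rel.of _ _ ⟨a, b, rfl, rfl⟩)

lemma actY_actY (v w : FreeGroup x) (b : Ysym x R) :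
    actY x R v (actY x R w b) = actY x R (v * w) b := by
  simp only [actY, mul_assoc]

lemma actY_one (b : Ysym x R) : actY x R 1 b = b := by
  simp only [actY, one_mul]

lemma θY_mul_θY_invY (a : Ysym x R) : θY x R ρ a * θY x R ρ (invY x R a) = 1 := by
  unfold θY invY
  cases a.2.2 <;> simp

/-- Moving `σ(b)` leftwards past `σ(a⁻¹)` and then `σ(a)` acts on `b` by
`θ(a) θ(a⁻¹) = 1`. -/
lemma commute_σU_of_mul_of_invY (a b : Ysym x R) :
    Commute (σU x R ρ (FreeMonoid.of a * FreeMonoid.of (invY x R a)))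
      (σU x R ρ (FreeMonoid.of b)) := by
  have h_act : actY x R (θY x R ρ a) (actY x R (θY x R ρ (invY x R a)) b) = b := by
    rw [actY_actY, θY_mul_θY_invY, actY_one]
  calc σU x R ρ (FreeMonoid.of a * FreeMonoid.of (invY x R a) * FreeMonoid.of b)
      = σU x R ρ (FreeMonoid.of a) *
          σU x R ρ (FreeMonoid.of (invY x R a) * FreeMonoid.of b) := by
        rw [mul_assoc, map_mul]
    _ = σU x R ρ (FreeMonoid.of a *
          FreeMonoid.of (actY x R (θY x R ρ (invY x R a)) b)) *
          σU x R ρ (FreeMonoid.of (invY x R a)) := by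
        rw [σU_of_mul_of, map_mul, map_mul, ← mul_assoc]
    _ = σU x R ρ (FreeMonoid.of b * (FreeMonoid.of a * FreeMonoid.of (invY x R a))) := by
        rw [σU_of_mul_of, h_act, ← mul_assoc, map_mul _ (_ * _)]

lemma frakU_le_center : frakU x R ρ ≤ Submonoid.center (Upsilon x R ρ) := by
  refine Submonoid.closure_le.mpr ?_
  rintro _ ⟨a, rfl⟩
  exact mem_center_of_commute_freeMonoid_of (σU_surjective x R ρ)
    (commute_σU_of_mul_of_invY x R ρ a)

/-- every element of `𝔘` is central in `Υ`. -/
theorem frakU_central :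
    ∀ u ∈ frakU x R ρ, ∀ s : Upsilon x R ρ, u * s = s * u :=
  fun _ hu s => (Submonoid.mem_center_iff.mp (frakU_le_center x R ρ hu) s).symm

end
end

section
/- In the Squier complex of a monoid presentation, for every two positive paths A = e₁ ∘ ⋯ ∘ eₙ and B = f₁ ∘ ⋯ ∘ fₘ (or more generally paths with edges of either orientation), the two parallel paths A·ιB ∘ τA·B and ιA·B ∘ A·τB are homotopic, where · denotes the two-sided action of the free monoid on edges and paths. -/
section

/- The Squier complex of a monoid presentation `P = (x, r)`: vertices are the
elements of the free monoid `F` on `x`, and `R` indexes the rewriting rules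
`(r₊, r₋)`. -/
variable (x R : Type) (rp rm : R → FreeMonoid x)

/-- Oriented edges `(w, r, ε, w')` of the Squier complex (`ε = true` is positive). -/
abbrev SqEdge : Type := FreeMonoid x × R × Bool × FreeMonoid x

/-- Initial vertex `ι(w, r, ε, w') = w r_ε w'`. -/
def sqSrc : SqEdge x R → FreeMonoid x :=
  fun e => e.1 * (if e.2.2.1 then rp e.2.1 else rm e.2.1) * e.2.2.2

/-- Terminal vertex `τ(w, r, ε, w') = w r_{−ε} w'`. -/
def sqTgt : SqEdge x R → FreeMonoid x :=
  fun e => e.1 * (if e.2.2.1 then rm e.2.1 else rp e.2.1) * e.2.2.2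

/-- The inverse edge `(w, r, ε, w')⁻¹ = (w, r, −ε, w')`. -/
def sqInv : SqEdge x R → SqEdge x R := fun e => (e.1, e.2.1, !e.2.2.1, e.2.2.2)

/-- Left translation `z·(w, r, ε, w') = (zw, r, ε, w')`. -/
def sqL : FreeMonoid x → SqEdge x R → SqEdge x R :=
  fun z e => (z * e.1, e.2.1, e.2.2.1, e.2.2.2)

/-- Right translation `(w, r, ε, w')·z = (w, r, ε, w'z)`. -/
def sqR : FreeMonoid x → SqEdge x R → SqEdge x R :=
  fun z e => (e.1, e.2.1, e.2.2.1, e.2.2.2 * z)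

/-- A path is a list of oriented edges with matching consecutive endpoints. -/
def SqIsPath (l : List (SqEdge x R)) : Prop :=
  List.Chain' (fun e f => sqTgt x R rp rm e = sqSrc x R rp rm f) l

/-- Homotopy of paths in the Squier complex: the equivalence relation on paths
generated by the square 2-cells `[e, f]` (for positive edges `e, f`), by
cancellation of an edge with its inverse, and closed under composition of paths. -/
inductive SqHomotopic : List (SqEdge x R) → List (SqEdge x R) → Prop
  | square (u v u' v' : FreeMonoid x) (r s : R) :
      SqHomotopic
        [(u, r, true, v * (u' * rp s * v')), (u * rm r * v * u', s, true, v')]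
        [(u * rp r * v * u', s, true, v'), (u, r, true, v * (u' * rm s * v'))]
  | cancel (e : SqEdge x R) : SqHomotopic [e, sqInv x R e] []
  | refl (p : List (SqEdge x R)) : SqHomotopic p p
  | symm {p q} : SqHomotopic p q → SqHomotopic q p
  | trans {p q r} : SqHomotopic p q → SqHomotopic q r → SqHomotopic p r
  | append (a b : List (SqEdge x R)) {p q} :
      SqHomotopic p q → SqHomotopic (a ++ p ++ b) (a ++ q ++ b)

/-! The 2-cell `[e, f]` is precisely the exchange relation for two positive edges `e, f`;
cancelling an edge against its inverse extends it to edges of either orientation. An edge is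
then exchanged past a path `B` one edge of `B` at a time, and a path `A` past `B` one edge of
`A` at a time. Both inductions run over paths with prescribed endpoints, where the empty path
makes the base cases trivial. -/

section Exchange

variable {x R} {rp rm}

local notation "ι" => sqSrc x R rp rm
local notation "τ" => sqTgt x R rp rm
local notation:50 p " ∼ " q => SqHomotopic x R rp rm p q

@[simp]
lemma sqInv_sqInv (e : SqEdge x R) : sqInv x R (sqInv x R e) = e := by
  simp [sqInv]

namespace SqHomotopic

instance : Trans (SqHomotopic x R rp rm) (SqHomotopic x R rp rm) (SqHomotopic x R rp rm) :=
  ⟨trans⟩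

variable {p q : List (SqEdge x R)}

lemma cons_left (a : SqEdge x R) (h : p ∼ q) : a :: p ∼ a :: q := by
  simpa using h.append [a] []

lemma append_right (b : List (SqEdge x R)) (h : p ∼ q) : p ++ b ∼ q ++ b := by
  simpa using h.append [] b

lemma cancel_left (e : SqEdge x R) (q : List (SqEdge x R)) : e :: sqInv x R e :: q ∼ q := by
  simpa using (cancel e).append_right q

lemma cancel_right (p : List (SqEdge x R)) (e : SqEdge x R) : p ++ [e, sqInv x R e] ∼ p := by
  simpa using (cancel e).append p []

/-- The same square read from an adjacent corner. -/
lemma rotate {a b c d : SqEdge x R} (h : [sqInv x R a, b] ∼ [c, sqInv x R d]) :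
    [a, c] ∼ [b, d] := by
  have hd : [a, c] ++ [sqInv x R d, d] ∼ [a, c] := by
    simpa using cancel_right [a, c] (sqInv x R d)
  calc [a, c]
      ∼ [a, c] ++ [sqInv x R d, d] := hd.symm
    _ = [a] ++ [c, sqInv x R d] ++ [d] := rfl
    _ ∼ [a] ++ [sqInv x R a, b] ++ [d] := h.symm.append [a] [d]
    _ = a :: sqInv x R a :: [b, d] := rfl
    _ ∼ [b, d] := cancel_left a [b, d]

end SqHomotopic

lemma sqHomotopic_exchange_pos (u v u' v' : FreeMonoid x) (r s : R) :
    [sqR x R (ι (u', s, true, v')) (u, r, true, v),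
        sqL x R (τ (u, r, true, v)) (u', s, true, v')] ∼
      [sqL x R (ι (u, r, true, v)) (u', s, true, v'),
        sqR x R (τ (u', s, true, v')) (u, r, true, v)] := by
  simpa [sqSrc, sqTgt, sqL, sqR, mul_assoc] using
    SqHomotopic.square (rp := rp) (rm := rm) u v u' v' r s

lemma sqHomotopic_exchange_pos_right (e : SqEdge x R) (u' v' : FreeMonoid x) (s : R) :
    [sqR x R (ι (u', s, true, v')) e, sqL x R (τ e) (u', s, true, v')] ∼
      [sqL x R (ι e) (u', s, true, v'), sqR x R (τ (u', s, true, v')) e] := by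
  rcases e with ⟨u, r, _ | _, v⟩
  -- `rotate` applies by unfolding: `sqInv` of a negative edge is the positive one, and the
  -- endpoints `ι`, `τ` of a negative edge are `τ`, `ι` of the positive one.
  · exact SqHomotopic.rotate (sqHomotopic_exchange_pos u v u' v' r s)
  · exact sqHomotopic_exchange_pos u v u' v' r s

lemma sqHomotopic_exchange_edge (e f : SqEdge x R) :
    [sqR x R (ι f) e, sqL x R (τ e) f] ∼ [sqL x R (ι e) f, sqR x R (τ f) e] := by
  rcases f with ⟨u', s, _ | _, v'⟩
  · exact (SqHomotopic.rotate (sqHomotopic_exchange_pos_right e u' v' s).symm).symm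
  · exact sqHomotopic_exchange_pos_right e u' v' s

variable (rp rm) in
inductive SqPath : FreeMonoid x → FreeMonoid x → List (SqEdge x R) → Prop
  | nil (u : FreeMonoid x) : SqPath u u []
  | cons {e : SqEdge x R} {v : FreeMonoid x} {p : List (SqEdge x R)} :
      SqPath (τ e) v p → SqPath (ι e) v (e :: p)

lemma SqIsPath.sqPath {A : List (SqEdge x R)} (hp : SqIsPath x R rp rm A) (hA : A ≠ []) :
    SqPath rp rm (ι (A.head hA)) (τ (A.getLast hA)) A := by
  induction A with
  | nil => contradiction
  | cons e A ih =>
    cases A with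
    | nil => exact .cons (.nil _)
    | cons f A =>
      obtain ⟨hef, hp⟩ := List.isChain_cons_cons.mp hp
      have h := ih hp (List.cons_ne_nil f A)
      rw [List.head_cons, ← hef] at h
      simpa using SqPath.cons h

lemma sqHomotopic_exchange_edge_path (e : SqEdge x R) {b b' : FreeMonoid x}
    {B : List (SqEdge x R)} (hB : SqPath rp rm b b' B) :
    sqR x R b e :: B.map (sqL x R (τ e)) ∼ B.map (sqL x R (ι e)) ++ [sqR x R b' e] := by
  induction hB with
  | nil u => exact .refl _
  | @cons f v p _ ih =>
    calc sqR x R (ι f) e :: (f :: p).map (sqL x R (τ e))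
        = [sqR x R (ι f) e, sqL x R (τ e) f] ++ p.map (sqL x R (τ e)) := rfl
      _ ∼ [sqL x R (ι e) f, sqR x R (τ f) e] ++ p.map (sqL x R (τ e)) :=
        (sqHomotopic_exchange_edge e f).append_right _
      _ = sqL x R (ι e) f :: (sqR x R (τ f) e :: p.map (sqL x R (τ e))) := rfl
      _ ∼ sqL x R (ι e) f :: (p.map (sqL x R (ι e)) ++ [sqR x R v e]) := ih.cons_left _
      _ = (f :: p).map (sqL x R (ι e)) ++ [sqR x R v e] := rfl

lemma sqHomotopic_exchange_path {a a' b b' : FreeMonoid x} {A B : List (SqEdge x R)}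
    (hA : SqPath rp rm a a' A) (hB : SqPath rp rm b b' B) :
    A.map (sqR x R b) ++ B.map (sqL x R a') ∼ B.map (sqL x R a) ++ A.map (sqR x R b') := by
  induction hA with
  | nil u => simpa using .refl _
  | @cons e v p _ ih =>
    calc (e :: p).map (sqR x R b) ++ B.map (sqL x R v)
        = sqR x R b e :: (p.map (sqR x R b) ++ B.map (sqL x R v)) := rfl
      _ ∼ sqR x R b e :: (B.map (sqL x R (τ e)) ++ p.map (sqR x R b')) := ih.cons_left _
      _ = (sqR x R b e :: B.map (sqL x R (τ e))) ++ p.map (sqR x R b') := rfl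
      _ ∼ (B.map (sqL x R (ι e)) ++ [sqR x R b' e]) ++ p.map (sqR x R b') :=
        (sqHomotopic_exchange_edge_path e hB).append_right _
      _ = B.map (sqL x R (ι e)) ++ (e :: p).map (sqR x R b') := by simp

end Exchange

/-- for any two paths `A`, `B` of positive length in the Squier
complex, the parallel paths `A·ιB ∘ τA·B` and `ιA·B ∘ A·τB` are homotopic. -/
theorem squier_exchange_homotopic
    (A B : List (SqEdge x R)) (hA : A ≠ []) (hB : B ≠ [])
    (hpA : SqIsPath x R rp rm A) (hpB : SqIsPath x R rp rm B) :
    SqHomotopic x R rp rm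
      (A.map (sqR x R (sqSrc x R rp rm (B.head hB))) ++
        B.map (sqL x R (sqTgt x R rp rm (A.getLast hA))))
      (B.map (sqL x R (sqSrc x R rp rm (A.head hA))) ++
        A.map (sqR x R (sqTgt x R rp rm (B.getLast hB)))) :=
  sqHomotopic_exchange_path (hpA.sqPath hA) (hpB.sqPath hB)

end
end

section
/- Let S be a monoid given by a monoid presentation (x, r), let ZF → ZS be the induced ring epimorphism of integral monoid rings, and let J be its kernel. Then J, as an abelian group, is generated by the elements u(r₊ − r₋)v, where u, v range over the free monoid F on x and (r₊, r₋) ∈ r. -/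
section

/- A monoid presentation `(x, r)`: rules `(r₊ i, r₋ i)` on the free monoid `F` on
`x`; `S` is the presented monoid `F/↔*`. -/
variable (x R : Type) (rp rm : R → FreeMonoid x)

/-- The Thue congruence on `F` generated by the rules. -/
def thueCon : Con (FreeMonoid x) :=
  conGen fun a b => ∃ i : R, a = rp i ∧ b = rm i

/-- The monoid `S` given by the presentation. -/
def presMonoid : Type := (thueCon x R rp rm).Quotient

instance : Monoid (presMonoid x R rp rm) := by unfold presMonoid; infer_instance

/-- The induced ring epimorphism `ZF → ZS` of integral monoid rings. -/
noncomputable def ringEpi :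
    MonoidAlgebra ℤ (FreeMonoid x) →+* MonoidAlgebra ℤ (presMonoid x R rp rm) :=
  MonoidAlgebra.mapDomainRingHom ℤ (Con.mk' (thueCon x R rp rm))

variable {x R rp rm}

noncomputable def Kgrp : AddSubgroup (MonoidAlgebra ℤ (FreeMonoid x)) :=
  AddSubgroup.closure
    {z : MonoidAlgebra ℤ (FreeMonoid x) |
      ∃ (u v : FreeMonoid x) (i : R),
        z = MonoidAlgebra.of ℤ (FreeMonoid x) u *
            (MonoidAlgebra.of ℤ (FreeMonoid x) (rp i) -
              MonoidAlgebra.of ℤ (FreeMonoid x) (rm i)) *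
            MonoidAlgebra.of ℤ (FreeMonoid x) v}

lemma mul_of_left_mem {z : MonoidAlgebra ℤ (FreeMonoid x)} (hz : z ∈ Kgrp (rp := rp) (rm := rm))
    (w : FreeMonoid x) : MonoidAlgebra.of ℤ (FreeMonoid x) w * z ∈ Kgrp (rp := rp) (rm := rm) := by
  induction hz using AddSubgroup.closure_induction with
  | mem a ha =>
    obtain ⟨u, v, i, rfl⟩ := ha
    refine AddSubgroup.subset_closure ⟨w * u, v, i, ?_⟩
    rw [map_mul]; simp only [mul_assoc]
  | zero => simpa using AddSubgroup.zero_mem _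
  | add a b _ _ ha hb => rw [mul_add]; exact AddSubgroup.add_mem _ ha hb
  | neg a _ ha => rw [mul_neg]; exact AddSubgroup.neg_mem _ ha

lemma mul_of_right_mem {z : MonoidAlgebra ℤ (FreeMonoid x)} (hz : z ∈ Kgrp (rp := rp) (rm := rm))
    (w : FreeMonoid x) : z * MonoidAlgebra.of ℤ (FreeMonoid x) w ∈ Kgrp (rp := rp) (rm := rm) := by
  induction hz using AddSubgroup.closure_induction with
  | mem a ha =>
    obtain ⟨u, v, i, rfl⟩ := ha
    refine AddSubgroup.subset_closure ⟨u, v * w, i, ?_⟩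
    rw [map_mul]; simp only [mul_assoc]
  | zero => simpa using AddSubgroup.zero_mem _
  | add a b _ _ ha hb => rw [add_mul]; exact AddSubgroup.add_mem _ ha hb
  | neg a _ ha => rw [neg_mul]; exact AddSubgroup.neg_mem _ ha

lemma diff_mem {a b : FreeMonoid x} (h : thueCon x R rp rm a b) :
    MonoidAlgebra.of ℤ (FreeMonoid x) a - MonoidAlgebra.of ℤ (FreeMonoid x) b
      ∈ Kgrp (rp := rp) (rm := rm) := by
  have h' : ConGen.Rel (fun a b => ∃ i : R, a = rp i ∧ b = rm i) a b := h
  clear h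
  induction h' with
  | of a b hab =>
    obtain ⟨i, rfl, rfl⟩ := hab
    refine AddSubgroup.subset_closure ⟨1, 1, i, ?_⟩
    simp [← MonoidAlgebra.one_def]
  | refl a => simpa using AddSubgroup.zero_mem _
  | symm _ ih => simpa using AddSubgroup.neg_mem _ ih
  | trans _ _ ih1 ih2 =>
    have := AddSubgroup.add_mem _ ih1 ih2
    simpa using this
  | mul _ _ ih1 ih2 =>
    rename_i w p y q _ _
    have h1 := mul_of_right_mem ih1 y
    have h2 := mul_of_left_mem ih2 p
    have := AddSubgroup.add_mem _ h1 h2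
    rw [map_mul, map_mul]
    rw [sub_mul, mul_sub] at *
    convert this using 1
    abel


noncomputable def toQuot (rp rm : R → FreeMonoid x) :
    presMonoid x R rp rm → MonoidAlgebra ℤ (FreeMonoid x) ⧸ Kgrp (rp := rp) (rm := rm) :=
  Quotient.lift (fun a => QuotientAddGroup.mk (MonoidAlgebra.of ℤ (FreeMonoid x) a))
    (fun a b h => by
      refine QuotientAddGroup.eq.mpr ?_
      rw [neg_add_eq_sub]
      simpa [neg_sub] using AddSubgroup.neg_mem _ (diff_mem h))

noncomputable def phi (rp rm : R → FreeMonoid x) :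
    MonoidAlgebra ℤ (presMonoid x R rp rm) →+ MonoidAlgebra ℤ (FreeMonoid x) ⧸ Kgrp (rp := rp) (rm := rm) :=
  (Finsupp.liftAddHom (fun s => zmultiplesHom _ (toQuot rp rm s))).comp
    MonoidAlgebra.coeffAddEquiv.toAddMonoidHom

lemma phi_ringEpi (z : MonoidAlgebra ℤ (FreeMonoid x)) :
    phi rp rm (ringEpi x R rp rm z) = QuotientAddGroup.mk z := by
  have : (phi rp rm).comp (ringEpi x R rp rm).toAddMonoidHom
      = QuotientAddGroup.mk' (Kgrp (rp := rp) (rm := rm)) := by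
    apply MonoidAlgebra.addMonoidHom_ext
    intro a n
    show phi rp rm (ringEpi x R rp rm (MonoidAlgebra.single a n)) = _
    have h1 : ringEpi x R rp rm (MonoidAlgebra.single a n)
        = MonoidAlgebra.single (Con.mk' (thueCon x R rp rm) a) n :=
      MonoidAlgebra.mapDomain_single
    rw [h1]
    show (Finsupp.liftAddHom (fun s => zmultiplesHom _ (toQuot rp rm s)))
        (Finsupp.single (Con.mk' (thueCon x R rp rm) a) n) = _
    erw [Finsupp.liftAddHom_apply_single]
    show n • toQuot rp rm (Con.mk' (thueCon x R rp rm) a) = _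
    have h2 : toQuot rp rm (Con.mk' (thueCon x R rp rm) a)
        = QuotientAddGroup.mk (MonoidAlgebra.of ℤ (FreeMonoid x) a) := rfl
    rw [h2, ← QuotientAddGroup.mk_zsmul]
    congr 1
    show n • (MonoidAlgebra.single a (1:ℤ)) = MonoidAlgebra.single a n
    rw [MonoidAlgebra.smul_single, smul_eq_mul, mul_one]
  exact DFunLike.congr_fun this z

/-- the kernel `J` of the ring epimorphism `ZF → ZS`, as an abelian
group, is generated by the elements `u (r₊ − r₋) v` with `u, v ∈ F` and
`(r₊, r₋)` a defining rule. -/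
theorem kernel_generated_by_rules :
    AddSubgroup.closure
        {z : MonoidAlgebra ℤ (FreeMonoid x) |
          ∃ (u v : FreeMonoid x) (i : R),
            z = MonoidAlgebra.of ℤ (FreeMonoid x) u *
                (MonoidAlgebra.of ℤ (FreeMonoid x) (rp i) -
                  MonoidAlgebra.of ℤ (FreeMonoid x) (rm i)) *
                MonoidAlgebra.of ℤ (FreeMonoid x) v}
      = (ringEpi x R rp rm).toAddMonoidHom.ker := by
  apply le_antisymm
  · rw [AddSubgroup.closure_le]
    rintro z ⟨u, v, i, rfl⟩
    simp only [SetLike.mem_coe, AddMonoidHom.mem_ker, RingHom.toAddMonoidHom_eq_coe,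
      AddMonoidHom.coe_coe, map_mul, map_sub]
    have : (Con.mk' (thueCon x R rp rm) (rp i) : presMonoid x R rp rm)
        = Con.mk' (thueCon x R rp rm) (rm i) := by
      apply (Con.eq _).mpr
      exact ConGen.Rel.of _ _ ⟨i, rfl, rfl⟩
    have h2 : (ringEpi x R rp rm) (MonoidAlgebra.of ℤ (FreeMonoid x) (rp i))
        = (ringEpi x R rp rm) (MonoidAlgebra.of ℤ (FreeMonoid x) (rm i)) := by
      show MonoidAlgebra.mapDomain _ _ = MonoidAlgebra.mapDomain _ _
      simp only [MonoidAlgebra.of_apply, MonoidAlgebra.mapDomain_single]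
      exact congrArg (fun s => MonoidAlgebra.single s (1:ℤ)) this
    rw [show (ringEpi x R rp rm) (MonoidAlgebra.of ℤ (FreeMonoid x) (rp i))
        - (ringEpi x R rp rm) (MonoidAlgebra.of ℤ (FreeMonoid x) (rm i)) = 0 by
      rw [h2, sub_self]]
    rw [mul_zero, zero_mul]
  · intro z hz
    have h0 : ringEpi x R rp rm z = 0 := hz
    have := phi_ringEpi (rp := rp) (rm := rm) z
    rw [h0, map_zero] at this
    exact (QuotientAddGroup.eq_zero_iff z).mp this.symm


end
end
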